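/- (Lemma 3.7, identity (3.18).) Suppose τ₁, τ₂ : (ℕ → ℂ) × (ℕ → ℂ) → ℂ are continuous and (τ₁, τ₂) satisfies the KP-mKP Fay identity. Then for all x, y : ℕ → ℂ and all pairwise distinct nonzero s₁, s₂, s₃ ∈ ℂ: τ₁(x − [s₃], y + [s₁] − [s₂]) · τ₂(x, y) = (1 − s₂/s₁) · τ₁(x − [s₃], y + [s₁]) · τ₂(x, y − [s₂]) + (s₂/s₁) · τ₁(x − [s₃], y) · τ₂(x, y + [s₁] − [s₂]). -/

import Mathlib

/-- The shift `[s] : ℕ → ℂ`, `[s](k) = s^(k+1)/(k+1)`, representing the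
sequence `(s, s²/2, s³/3, …)` of time variables. -/
noncomputable def sh (s : ℂ) : ℕ → ℂ := fun k => s ^ (k + 1) / ((k : ℂ) + 1)

/-- The KP-mKP Fay identity (equation (3.1) of the paper) for a pair of tau
functions `(τ₁, τ₂)`. -/
def KPmKPFay (τ₁ τ₂ : (ℕ → ℂ) × (ℕ → ℂ) → ℂ) : Prop :=
  ∀ x y : ℕ → ℂ, ∀ s0 s1 s2 s3 t0 t1 t2 t3 : ℂ,
    s0 ≠ 0 → s1 ≠ 0 → s2 ≠ 0 → s3 ≠ 0 →
    s0 ≠ s1 → s0 ≠ s2 → s0 ≠ s3 → s1 ≠ s2 → s1 ≠ s3 → s2 ≠ s3 →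
    t0 ≠ 0 → t1 ≠ 0 → t2 ≠ 0 → t3 ≠ 0 →
    t0 ≠ t1 → t0 ≠ t2 → t0 ≠ t3 → t1 ≠ t2 → t1 ≠ t3 → t2 ≠ t3 →
    (s1 * (s1 - s0) / ((s1 - s2) * (s1 - s3)))
        * τ₁ (x + sh s2 + sh s3, y + sh t1 + sh t2 + sh t3)
        * τ₂ (x + sh s0 + sh s1, y + sh t0)
      + (s2 * (s2 - s0) / ((s2 - s3) * (s2 - s1)))
        * τ₁ (x + sh s3 + sh s1, y + sh t1 + sh t2 + sh t3)
        * τ₂ (x + sh s0 + sh s2, y + sh t0)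
      + (s3 * (s3 - s0) / ((s3 - s1) * (s3 - s2)))
        * τ₁ (x + sh s1 + sh s2, y + sh t1 + sh t2 + sh t3)
        * τ₂ (x + sh s0 + sh s3, y + sh t0)
    = (t1 * (t1 - t0) / ((t1 - t2) * (t1 - t3)))
        * τ₂ (x + sh s1 + sh s2 + sh s3, y + sh t2 + sh t3)
        * τ₁ (x + sh s0, y + sh t0 + sh t1)
      + (t2 * (t2 - t0) / ((t2 - t3) * (t2 - t1)))
        * τ₂ (x + sh s1 + sh s2 + sh s3, y + sh t3 + sh t1)
        * τ₁ (x + sh s0, y + sh t0 + sh t2)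
      + (t3 * (t3 - t0) / ((t3 - t1) * (t3 - t2)))
        * τ₂ (x + sh s1 + sh s2 + sh s3, y + sh t1 + sh t2)
        * τ₁ (x + sh s0, y + sh t0 + sh t3)

open Filter Topology

lemma sh_continuous : Continuous sh :=
  continuous_pi fun k => (continuous_pow (k + 1)).div_const _

lemma sh_zero : sh 0 = 0 := by funext k; simp [sh]

lemma sh_tendsto_zero {f : ℂ → ℂ} (hf : Filter.Tendsto f (nhdsWithin (0:ℂ) {(0:ℂ)}ᶜ) (nhds 0)) :
    Filter.Tendsto (fun ε => sh (f ε)) (nhdsWithin (0:ℂ) {(0:ℂ)}ᶜ) (nhds 0) := by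
  have h0 : Filter.Tendsto sh (nhds 0) (nhds 0) := by
    simpa [sh_zero] using sh_continuous.tendsto 0
  exact h0.comp hf

lemma tendsto_id' : Filter.Tendsto (fun ε : ℂ => ε) (nhdsWithin (0:ℂ) {(0:ℂ)}ᶜ) (nhds 0) :=
  Filter.tendsto_id.mono_left nhdsWithin_le_nhds

lemma tendsto_sq' : Filter.Tendsto (fun ε : ℂ => ε ^ 2) (nhdsWithin (0:ℂ) {(0:ℂ)}ᶜ) (nhds 0) := by
  have : Filter.Tendsto (fun ε : ℂ => ε ^ 2) (nhds 0) (nhds 0) := by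
    simpa using ((continuous_pow 2 : Continuous fun x : ℂ => x ^ 2).tendsto 0)
  exact this.mono_left nhdsWithin_le_nhds

lemma tendsto_two_sq' : Filter.Tendsto (fun ε : ℂ => 2 * ε ^ 2) (nhdsWithin (0:ℂ) {(0:ℂ)}ᶜ) (nhds 0) := by
  simpa using tendsto_const_nhds.mul tendsto_sq'

/-- Lemma 3.7, identity (3.18). -/
theorem fay_identity_318 (τ₁ τ₂ : (ℕ → ℂ) × (ℕ → ℂ) → ℂ)
    (hc1 : Continuous τ₁) (hc2 : Continuous τ₂)
    (hFay : KPmKPFay τ₁ τ₂) :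
    ∀ x y : ℕ → ℂ, ∀ s1 s2 s3 : ℂ,
      s1 ≠ 0 → s2 ≠ 0 → s3 ≠ 0 → s1 ≠ s2 → s1 ≠ s3 → s2 ≠ s3 →
      τ₁ (x - sh s3, y + sh s1 - sh s2) * τ₂ (x, y)
        = (1 - s2 / s1) * τ₁ (x - sh s3, y + sh s1) * τ₂ (x, y - sh s2)
          + (s2 / s1) * τ₁ (x - sh s3, y) * τ₂ (x, y + sh s1 - sh s2) := by
  intro x y s1 s2 s3 h1 h2 h3 h12 h13 h23
  have h21 : s2 ≠ s1 := h12.symm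
  set X : ℕ → ℂ := x - sh s3 with hX
  set Y : ℕ → ℂ := y - sh s2 with hY
  set l : Filter ℂ := nhdsWithin (0:ℂ) {(0:ℂ)}ᶜ with hl
  -- shift limits
  have Sid : Filter.Tendsto (fun ε : ℂ => sh ε) l (nhds 0) := sh_tendsto_zero tendsto_id'
  have Ssq : Filter.Tendsto (fun ε : ℂ => sh (ε ^ 2)) l (nhds 0) := sh_tendsto_zero tendsto_sq'
  have S2sq : Filter.Tendsto (fun ε : ℂ => sh (2 * ε ^ 2)) l (nhds 0) := sh_tendsto_zero tendsto_two_sq'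
  have comp1 : ∀ (f g : ℂ → ℕ → ℂ) (a b : ℕ → ℂ), Filter.Tendsto f l (nhds a) →
      Filter.Tendsto g l (nhds b) →
      Filter.Tendsto (fun ε => τ₁ (f ε, g ε)) l (nhds (τ₁ (a, b))) := fun f g a b hf hg =>
    (hc1.tendsto _).comp (hf.prodMk_nhds hg)
  have comp2 : ∀ (f g : ℂ → ℕ → ℂ) (a b : ℕ → ℂ), Filter.Tendsto f l (nhds a) →
      Filter.Tendsto g l (nhds b) →
      Filter.Tendsto (fun ε => τ₂ (f ε, g ε)) l (nhds (τ₂ (a, b))) := fun f g a b hf hg =>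
    (hc2.tendsto _).comp (hf.prodMk_nhds hg)
  -- argument limits
  have gX : Filter.Tendsto (fun ε : ℂ => X + sh ε + sh (ε^2)) l (nhds X) := by
    simpa using (tendsto_const_nhds.add Sid).add Ssq
  have gXs3a : Filter.Tendsto (fun ε : ℂ => X + sh (ε^2) + sh s3) l (nhds (X + sh s3)) := by
    simpa using (tendsto_const_nhds.add Ssq).add
      (tendsto_const_nhds : Filter.Tendsto (fun _ : ℂ => sh s3) l _)
  have gXs3b : Filter.Tendsto (fun ε : ℂ => X + sh s3 + sh ε) l (nhds (X + sh s3)) := by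
    simpa using (tendsto_const_nhds :
      Filter.Tendsto (fun _ : ℂ => X + sh s3) l _).add Sid
  have gX2a : Filter.Tendsto (fun ε : ℂ => X + sh (2*ε^2) + sh s3) l (nhds (X + sh s3)) := by
    simpa using (tendsto_const_nhds.add S2sq).add
      (tendsto_const_nhds : Filter.Tendsto (fun _ : ℂ => sh s3) l _)
  have gX2b : Filter.Tendsto (fun ε : ℂ => X + sh (2*ε^2) + sh ε) l (nhds X) := by
    simpa using (tendsto_const_nhds.add S2sq).add Sid
  have gX2c : Filter.Tendsto (fun ε : ℂ => X + sh (2*ε^2) + sh (ε^2)) l (nhds X) := by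
    simpa using (tendsto_const_nhds.add S2sq).add Ssq
  have gX2 : Filter.Tendsto (fun ε : ℂ => X + sh (2*ε^2)) l (nhds X) := by
    simpa using tendsto_const_nhds.add S2sq
  have gXfull : Filter.Tendsto (fun ε : ℂ => X + sh s3 + sh ε + sh (ε^2)) l (nhds (X + sh s3)) := by
    simpa using ((tendsto_const_nhds :
      Filter.Tendsto (fun _ : ℂ => X + sh s3) l _).add Sid).add Ssq
  have gY1 : Filter.Tendsto (fun ε : ℂ => Y + sh s1 + sh ε + sh (ε^2)) l (nhds (Y + sh s1)) := by
    simpa using ((tendsto_const_nhds :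
      Filter.Tendsto (fun _ : ℂ => Y + sh s1) l _).add Sid).add Ssq
  have gY0 : Filter.Tendsto (fun ε : ℂ => Y + sh ε + sh (ε^2)) l (nhds Y) := by
    simpa using (tendsto_const_nhds.add Sid).add Ssq
  have gYsq1 : Filter.Tendsto (fun ε : ℂ => Y + sh (ε^2) + sh s1) l (nhds (Y + sh s1)) := by
    simpa using (tendsto_const_nhds.add Ssq).add
      (tendsto_const_nhds : Filter.Tendsto (fun _ : ℂ => sh s1) l _)
  have gYs2e : Filter.Tendsto (fun ε : ℂ => Y + sh s2 + sh ε) l (nhds (Y + sh s2)) := by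
    simpa using (tendsto_const_nhds :
      Filter.Tendsto (fun _ : ℂ => Y + sh s2) l _).add Sid
  have gYs2sq : Filter.Tendsto (fun ε : ℂ => Y + sh s2 + sh (ε^2)) l (nhds (Y + sh s2)) := by
    simpa using (tendsto_const_nhds :
      Filter.Tendsto (fun _ : ℂ => Y + sh s2) l _).add Ssq
  have gYs1e : Filter.Tendsto (fun ε : ℂ => Y + sh s1 + sh ε) l (nhds (Y + sh s1)) := by
    simpa using (tendsto_const_nhds :
      Filter.Tendsto (fun _ : ℂ => Y + sh s1) l _).add Sid
  -- coefficient limits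
  have hev0 : ∀ᶠ ε in l, ε ≠ 0 := eventually_mem_nhdsWithin
  have k1 : Filter.Tendsto (fun ε : ℂ => s3 * (s3 - 2*ε^2) / ((s3 - ε) * (s3 - ε^2))) l
      (nhds 1) := by
    have hden : (s3 - 0) * (s3 - 0) ≠ 0 := by simpa using mul_ne_zero h3 h3
    have h : Filter.Tendsto (fun ε : ℂ => s3 * (s3 - 2*ε^2) / ((s3 - ε) * (s3 - ε^2))) l
        (nhds (s3 * (s3 - 0) / ((s3 - 0) * (s3 - 0)))) :=
      (tendsto_const_nhds.mul (tendsto_const_nhds.sub tendsto_two_sq')).div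
        ((tendsto_const_nhds.sub tendsto_id').mul (tendsto_const_nhds.sub tendsto_sq')) hden
    have e : s3 * (s3 - 0) / ((s3 - 0) * (s3 - 0)) = 1 := by rw [sub_zero]; field_simp
    rwa [e] at h
  have k2 : Filter.Tendsto (fun ε : ℂ => ε * (ε - 2*ε^2) / ((ε - ε^2) * (ε - s3))) l
      (nhds 0) := by
    have hden : ((1:ℂ) - 0) * (0 - s3) ≠ 0 := by simpa using h3
    have h' : Filter.Tendsto (fun ε : ℂ => ε * (1 - 2*ε) / ((1 - ε) * (ε - s3))) l
        (nhds (0 * (1 - 2*0) / ((1 - 0) * (0 - s3)))) :=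
      (tendsto_id'.mul (tendsto_const_nhds.sub (tendsto_id'.const_mul (2:ℂ)))).div
        ((tendsto_const_nhds.sub tendsto_id').mul (tendsto_id'.sub tendsto_const_nhds)) hden
    rw [show (0:ℂ) * (1 - 2*0) / ((1 - 0) * (0 - s3)) = 0 by simp] at h'
    refine h'.congr' ?_
    filter_upwards [hev0] with ε hε
    rw [show ε * (ε - 2*ε^2) = ε * (ε * (1 - 2*ε)) by ring,
      show (ε - ε^2) * (ε - s3) = ε * ((1 - ε) * (ε - s3)) by ring,
      mul_div_mul_left _ _ hε]
  have k3 : Filter.Tendsto (fun ε : ℂ => ε^2 * (ε^2 - 2*ε^2) / ((ε^2 - s3) * (ε^2 - ε))) l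
      (nhds 0) := by
    have hden : ((0:ℂ) - s3) * (0 - 1) ≠ 0 := by simpa using h3
    have h' : Filter.Tendsto (fun ε : ℂ => ε * (ε^2 - 2*ε^2) / ((ε^2 - s3) * (ε - 1))) l
        (nhds (0 * (0 - 0) / ((0 - s3) * (0 - 1)))) :=
      (tendsto_id'.mul (tendsto_sq'.sub tendsto_two_sq')).div
        ((tendsto_sq'.sub tendsto_const_nhds).mul (tendsto_id'.sub tendsto_const_nhds)) hden
    rw [show (0:ℂ) * (0 - 0) / ((0 - s3) * (0 - 1)) = 0 by simp] at h'
    refine h'.congr' ?_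
    filter_upwards [hev0] with ε hε
    rw [show ε^2 * (ε^2 - 2*ε^2) = ε * (ε * (ε^2 - 2*ε^2)) by ring,
      show (ε^2 - s3) * (ε^2 - ε) = ε * ((ε^2 - s3) * (ε - 1)) by ring,
      mul_div_mul_left _ _ hε]
  have k4 : Filter.Tendsto (fun ε : ℂ => s1 * (s1 - s2) / ((s1 - ε) * (s1 - ε^2))) l
      (nhds (1 - s2 / s1)) := by
    have hden : (s1 - 0) * (s1 - 0) ≠ 0 := by simpa using mul_ne_zero h1 h1
    have h : Filter.Tendsto (fun ε : ℂ => s1 * (s1 - s2) / ((s1 - ε) * (s1 - ε^2))) l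
        (nhds (s1 * (s1 - s2) / ((s1 - 0) * (s1 - 0)))) :=
      tendsto_const_nhds.div
        ((tendsto_const_nhds.sub tendsto_id').mul (tendsto_const_nhds.sub tendsto_sq')) hden
    have e : s1 * (s1 - s2) / ((s1 - 0) * (s1 - 0)) = 1 - s2 / s1 := by
      field_simp; ring
    rwa [e] at h
  have k5 : Filter.Tendsto (fun ε : ℂ => ε * (ε - s2) / ((ε - ε^2) * (ε - s1))) l
      (nhds (s2 / s1)) := by
    have hden : ((1:ℂ) - 0) * (0 - s1) ≠ 0 := by simpa using h1
    have h : Filter.Tendsto (fun ε : ℂ => (ε - s2) / ((1 - ε) * (ε - s1))) l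
        (nhds ((0 - s2) / ((1 - 0) * (0 - s1)))) :=
      (tendsto_id'.sub tendsto_const_nhds).div
        ((tendsto_const_nhds.sub tendsto_id').mul (tendsto_id'.sub tendsto_const_nhds)) hden
    have e : ((0:ℂ) - s2) / ((1 - 0) * (0 - s1)) = s2 / s1 := by
      rw [zero_sub, zero_sub, sub_zero, one_mul, neg_div_neg_eq]
    rw [e] at h
    refine h.congr' ?_
    filter_upwards [hev0] with ε hε
    rw [show ε * (ε - s2) = ε * (ε - s2) from rfl,
      show (ε - ε^2) * (ε - s1) = ε * ((1 - ε) * (ε - s1)) by ring,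
      show ε * (ε - s2) / (ε * ((1 - ε) * (ε - s1))) = (ε - s2) / ((1 - ε) * (ε - s1)) from
        mul_div_mul_left _ _ hε]
  have k6 : Filter.Tendsto (fun ε : ℂ => ε^2 * (ε^2 - s2) / ((ε^2 - s1) * (ε^2 - ε))) l
      (nhds 0) := by
    have hden : ((0:ℂ) - s1) * (0 - 1) ≠ 0 := by simpa using h1
    have h' : Filter.Tendsto (fun ε : ℂ => ε * (ε^2 - s2) / ((ε^2 - s1) * (ε - 1))) l
        (nhds (0 * (0 - s2) / ((0 - s1) * (0 - 1)))) :=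
      (tendsto_id'.mul (tendsto_sq'.sub tendsto_const_nhds)).div
        ((tendsto_sq'.sub tendsto_const_nhds).mul (tendsto_id'.sub tendsto_const_nhds)) hden
    rw [show (0:ℂ) * (0 - s2) / ((0 - s1) * (0 - 1)) = 0 by simp] at h'
    refine h'.congr' ?_
    filter_upwards [hev0] with ε hε
    rw [show ε^2 * (ε^2 - s2) = ε * (ε * (ε^2 - s2)) by ring,
      show (ε^2 - s1) * (ε^2 - ε) = ε * ((ε^2 - s1) * (ε - 1)) by ring,
      mul_div_mul_left _ _ hε]
  -- the two sides of the Fay identity as functions of ε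
  set L : ℂ → ℂ := fun ε =>
      s3 * (s3 - 2*ε^2) / ((s3 - ε) * (s3 - ε^2))
        * τ₁ (X + sh ε + sh (ε^2), Y + sh s1 + sh ε + sh (ε^2))
        * τ₂ (X + sh (2*ε^2) + sh s3, Y + sh s2)
      + ε * (ε - 2*ε^2) / ((ε - ε^2) * (ε - s3))
        * τ₁ (X + sh (ε^2) + sh s3, Y + sh s1 + sh ε + sh (ε^2))
        * τ₂ (X + sh (2*ε^2) + sh ε, Y + sh s2)
      + ε^2 * (ε^2 - 2*ε^2) / ((ε^2 - s3) * (ε^2 - ε))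
        * τ₁ (X + sh s3 + sh ε, Y + sh s1 + sh ε + sh (ε^2))
        * τ₂ (X + sh (2*ε^2) + sh (ε^2), Y + sh s2) with hLdef
  set R : ℂ → ℂ := fun ε =>
      s1 * (s1 - s2) / ((s1 - ε) * (s1 - ε^2))
        * τ₂ (X + sh s3 + sh ε + sh (ε^2), Y + sh ε + sh (ε^2))
        * τ₁ (X + sh (2*ε^2), Y + sh s2 + sh s1)
      + ε * (ε - s2) / ((ε - ε^2) * (ε - s1))
        * τ₂ (X + sh s3 + sh ε + sh (ε^2), Y + sh (ε^2) + sh s1)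
        * τ₁ (X + sh (2*ε^2), Y + sh s2 + sh ε)
      + ε^2 * (ε^2 - s2) / ((ε^2 - s1) * (ε^2 - ε))
        * τ₂ (X + sh s3 + sh ε + sh (ε^2), Y + sh s1 + sh ε)
        * τ₁ (X + sh (2*ε^2), Y + sh s2 + sh (ε^2)) with hRdef
  -- eventually, L = R by the Fay identity
  have hLR : L =ᶠ[l] R := by
    have ehalf : ∀ᶠ ε in l, ε ≠ (1/2 : ℂ) :=
      tendsto_id'.eventually_ne (by norm_num)
    have eone : ∀ᶠ ε in l, ε ≠ (1 : ℂ) :=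
      tendsto_id'.eventually_ne (by norm_num)
    have es3 : ∀ᶠ ε in l, ε ≠ s3 := tendsto_id'.eventually_ne h3.symm
    have es3' : ∀ᶠ ε in l, ε^2 ≠ s3 := tendsto_sq'.eventually_ne h3.symm
    have e2s3 : ∀ᶠ ε in l, 2*ε^2 ≠ s3 := tendsto_two_sq'.eventually_ne h3.symm
    have es1 : ∀ᶠ ε in l, ε ≠ s1 := tendsto_id'.eventually_ne h1.symm
    have es1' : ∀ᶠ ε in l, ε^2 ≠ s1 := tendsto_sq'.eventually_ne h1.symm
    have es2 : ∀ᶠ ε in l, ε ≠ s2 := tendsto_id'.eventually_ne h2.symm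
    have es2' : ∀ᶠ ε in l, ε^2 ≠ s2 := tendsto_sq'.eventually_ne h2.symm
    filter_upwards [hev0, ehalf, eone, es3, es3', e2s3, es1, es1', es2, es2'] with
      ε hε0 hεhalf hε1 hεs3 hεs3' hε2s3 hεs1 hεs1' hεs2 hεs2'
    have hsq0 : ε^2 ≠ 0 := pow_ne_zero 2 hε0
    have h2sq0 : (2:ℂ)*ε^2 ≠ 0 := mul_ne_zero two_ne_zero hsq0
    have hee : ε ≠ ε^2 := by
      intro h
      apply hε1
      have : ε * 1 = ε * ε := by rw [mul_one, ← sq]; exact h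
      exact (mul_left_cancel₀ hε0 this).symm
    have h2e : 2*ε^2 ≠ ε := by
      intro h
      apply hεhalf
      have : ε * (2*ε) = ε * 1 := by rw [mul_one]; linear_combination h
      have := mul_left_cancel₀ hε0 this
      field_simp
      linear_combination this
    have h2sq : 2*ε^2 ≠ ε^2 := by
      intro h
      apply hsq0
      linear_combination h
    exact hFay X Y (2*ε^2) s3 ε (ε^2) s2 s1 ε (ε^2)
      h2sq0 h3 hε0 hsq0
      hε2s3 h2e h2sq hεs3.symm hεs3'.symm hee
      h2 h1 hε0 hsq0
      h21 hεs2.symm hεs2'.symm hεs1.symm hεs1'.symm hee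
  -- limits of the two sides
  have hL : Filter.Tendsto L l (nhds
      (1 * τ₁ (X, Y + sh s1) * τ₂ (X + sh s3, Y + sh s2)
        + 0 * τ₁ (X + sh s3, Y + sh s1) * τ₂ (X, Y + sh s2)
        + 0 * τ₁ (X + sh s3, Y + sh s1) * τ₂ (X, Y + sh s2))) := by
    refine Filter.Tendsto.add (Filter.Tendsto.add ?_ ?_) ?_
    · exact (k1.mul (comp1 _ _ _ _ gX gY1)).mul (comp2 _ _ _ _ gX2a tendsto_const_nhds)
    · exact (k2.mul (comp1 _ _ _ _ gXs3a gY1)).mul (comp2 _ _ _ _ gX2b tendsto_const_nhds)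
    · exact (k3.mul (comp1 _ _ _ _ gXs3b gY1)).mul (comp2 _ _ _ _ gX2c tendsto_const_nhds)
  have hR : Filter.Tendsto R l (nhds
      ((1 - s2/s1) * τ₂ (X + sh s3, Y) * τ₁ (X, Y + sh s2 + sh s1)
        + (s2/s1) * τ₂ (X + sh s3, Y + sh s1) * τ₁ (X, Y + sh s2)
        + 0 * τ₂ (X + sh s3, Y + sh s1) * τ₁ (X, Y + sh s2))) := by
    refine Filter.Tendsto.add (Filter.Tendsto.add ?_ ?_) ?_
    · exact (k4.mul (comp2 _ _ _ _ gXfull gY0)).mul (comp1 _ _ _ _ gX2 tendsto_const_nhds)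
    · exact (k5.mul (comp2 _ _ _ _ gXfull gYsq1)).mul (comp1 _ _ _ _ gX2 gYs2e)
    · exact (k6.mul (comp2 _ _ _ _ gXfull gYs1e)).mul (comp1 _ _ _ _ gX2 gYs2sq)
  have EQ := tendsto_nhds_unique (Filter.Tendsto.congr' hLR hL) hR
  -- rewrite the limit points
  have eXs3 : X + sh s3 = x := by rw [hX]; abel
  have eYs2 : Y + sh s2 = y := by rw [hY]; abel
  have eYs2s1 : Y + sh s2 + sh s1 = y + sh s1 := by rw [eYs2]
  have eYs1 : Y + sh s1 = y + sh s1 - sh s2 := by rw [hY]; abel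
  rw [eYs2s1, eXs3, eYs2, eYs1] at EQ
  rw [show y + sh s1 - sh s2 = y + sh s1 - sh s2 from rfl]
  linear_combination EQ
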